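/- arXiv:2009.12257 — 7 statements merged into one kernel-verified Lean document; each statement's English description precedes it below -/
import Mathlib

section
/- Let G be a group, n a natural number, and s : Fin (n+1) → G a tuple of elements of G. The following are equivalent: (1) the elements (s i)⁻¹ * (s (i+1)) for 0 ≤ i < n pairwise commute; (2) the subgroup of G generated by the set {(s i)⁻¹ * (s j) : 0 ≤ i, j ≤ n} is commutative; (3) there exist an element x ∈ G and a commutative subgroup A of G such that s i ∈ x • A (the left coset of A by x) for every i. -/
open Pointwise

section

variable {G : Type*} [Group G]

theorem inv_mul_mem_of_forall_inv_mul_succ_mem {n : ℕ} {s : Fin (n + 1) → G} {H : Subgroup G}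
    (h : ∀ i : Fin n, (s i.castSucc)⁻¹ * s i.succ ∈ H) (i j : Fin (n + 1)) :
    (s i)⁻¹ * s j ∈ H := by
  have from_zero : ∀ k : Fin (n + 1), (s 0)⁻¹ * s k ∈ H := by
    intro k
    induction k using Fin.induction with
    | zero => simp
    | succ k ih => simpa [mul_assoc] using mul_mem ih (h k)
  simpa [mul_assoc] using mul_mem (inv_mem (from_zero i)) (from_zero j)

theorem inv_mul_mem_of_mem_leftCoset {A : Subgroup G} {x a b : G} (ha : a ∈ x • (A : Set G))
    (hb : b ∈ x • (A : Set G)) : a⁻¹ * b ∈ A := by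
  rw [mem_leftCoset_iff] at ha hb
  simpa [mul_assoc] using mul_mem (inv_mem ha) hb

end

/-- Lemma 2.2 (Lemma `lem:aff`): for a tuple `s : Fin (n+1) → G` in a group `G`, the
following are equivalent:
(1) the consecutive difference elements `(s i)⁻¹ * s (i+1)` pairwise commute;
(2) the subgroup generated by all `(s i)⁻¹ * s j` is commutative;
(3) all `s i` lie in a single left coset `x • A` of some commutative subgroup `A`. -/
theorem affinely_commutative_tfae {G : Type*} [Group G] (n : ℕ) (s : Fin (n + 1) → G) :
    List.TFAE
      [∀ i j : Fin n,
          Commute ((s i.castSucc)⁻¹ * s i.succ) ((s j.castSucc)⁻¹ * s j.succ),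
        IsMulCommutative (Subgroup.closure {g : G | ∃ i j : Fin (n + 1), g = (s i)⁻¹ * s j}),
        ∃ (x : G) (A : Subgroup G), IsMulCommutative A ∧ ∀ i : Fin (n + 1), s i ∈ x • (A : Set G)] := by
  tfae_have 1 → 2 := by
    intro h
    let C := Subgroup.closure (Set.range fun i : Fin n ↦ (s i.castSucc)⁻¹ * s i.succ)
    have : IsMulCommutative C :=
      Subgroup.isMulCommutative_closure (by rintro _ ⟨i, rfl⟩ _ ⟨j, rfl⟩; exact h i j)
    have mem_C : ∀ i j, (s i)⁻¹ * s j ∈ C :=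
      inv_mul_mem_of_forall_inv_mul_succ_mem fun i ↦ Subgroup.subset_closure ⟨i, rfl⟩
    refine Subgroup.isMulCommutative_closure ?_
    rintro _ ⟨i, j, rfl⟩ _ ⟨k, l, rfl⟩
    exact setLike_mul_comm (mem_C i j) (mem_C k l)
  tfae_have 2 → 3 := fun h ↦
    ⟨s 0, _, h, fun i ↦ (mem_leftCoset_iff _).2 (Subgroup.subset_closure ⟨0, i, rfl⟩)⟩
  tfae_have 3 → 1 := by
    rintro ⟨x, A, hA, hs⟩ i j
    exact setLike_mul_comm (s := A)
      (inv_mul_mem_of_mem_leftCoset (hs _) (hs _)) (inv_mul_mem_of_mem_leftCoset (hs _) (hs _))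
  tfae_finish
end

section
/- Let n be a natural number and let T = (Fin n → Circle) be the n-dimensional torus with the product topology. If φ : T → T is a continuous group automorphism such that the map t ↦ t⁻¹ * φ(t) is null-homotopic as a continuous map from T to T, then φ is the identity automorphism. -/
/-!
A null-homotopic map into the circle lifts through the covering `exp : ℝ → Circle`. For a
continuous homomorphism `ψ` from a compact connected group, the lift `ℓ` normalized by
`ℓ 1 = 0` is additive by uniqueness of lifts (`t ↦ ℓ (s * t)` and `t ↦ ℓ s + ℓ t` both lift
`t ↦ ψ (s * t)`), and a bounded additive real function vanishes, so `ψ` is trivial. Applied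
coordinatewise to the homomorphism `t ↦ t⁻¹ * φ t` of the torus, this gives `φ = id`.
-/

open Set Bornology

theorem ContinuousMap.Nullhomotopic.exists_lift {A E X : Type*} [TopologicalSpace A]
    [TopologicalSpace E] [TopologicalSpace X] {p : E → X} (cov : IsCoveringMap p)
    (hp : Function.Surjective p) {f : C(A, X)} (hf : f.Nullhomotopic) :
    ∃ g : C(A, E), p ∘ g = f := by
  obtain ⟨x, ⟨H⟩⟩ := hf
  obtain ⟨e, rfl⟩ := hp x
  refine ⟨(cov.liftHomotopy H.symm (.const A e) fun a => by simp).curry 1, funext fun a => ?_⟩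
  simpa using congr_fun (cov.liftHomotopy_lifts H.symm _ _) (1, a)

theorem eq_zero_of_map_mul_of_isBounded_range {M : Type*} [Monoid M] {f : M → ℝ}
    (hf : ∀ x y, f (x * y) = f x + f y) (hb : IsBounded (range f)) (x : M) : f x = 0 := by
  have hpow (k : ℕ) : f (x ^ k) = k * f x := by
    induction k with
    | zero => simpa using hf 1 1
    | succ k ih => rw [pow_succ, hf, ih]; push_cast; ring
  obtain ⟨C, hC⟩ := isBounded_iff_forall_norm_le.mp hb
  by_contra hx
  obtain ⟨k, hk⟩ := exists_nat_gt (C / |f x|)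
  have hCk : k * |f x| ≤ C := by
    simpa [hpow, abs_mul] using hC _ (mem_range_self (x ^ k))
  rw [div_lt_iff₀ (abs_pos.mpr hx)] at hk
  linarith

theorem ContinuousMonoidHom.eq_one_of_nullhomotopic {G : Type*} [Monoid G] [TopologicalSpace G]
    [ContinuousMul G] [CompactSpace G] [PreconnectedSpace G] (ψ : G →ₜ* Circle)
    (hψ : ψ.toContinuousMap.Nullhomotopic) : ψ = 1 := by
  obtain ⟨L, hL⟩ := hψ.exists_lift Circle.isCoveringMap_exp Circle.exp_surjective
  set ℓ : G → ℝ := fun x => L x - L 1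
  have hℓ (x : G) : Circle.exp (ℓ x) = ψ x := by
    have hL' (y : G) : Circle.exp (L y) = ψ y := congr_fun hL y
    rw [Circle.exp_sub, hL', hL', map_one, div_one]
  have hmul (s t : G) : ℓ (s * t) = ℓ s + ℓ t :=
    congr_fun (Circle.isCoveringMap_exp.eq_of_comp_eq (g₁ := fun t => ℓ (s * t))
      (g₂ := fun t => ℓ s + ℓ t) (by fun_prop) (by fun_prop)
      (funext fun t => by simp [hℓ, Circle.exp_add]) 1 (by simp [ℓ])) t
  have hb : IsBounded (range ℓ) := (isCompact_range (by fun_prop)).isBounded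
  ext x
  rw [← hℓ, eq_zero_of_map_mul_of_isBounded_range hmul hb x, Circle.exp_zero]
  rfl

theorem ContinuousMonoidHom.eq_one_of_nullhomotopic_pi {G ι : Type*} [Monoid G]
    [TopologicalSpace G] [ContinuousMul G] [CompactSpace G] [PreconnectedSpace G]
    (ψ : G →ₜ* (ι → Circle)) (hψ : ψ.toContinuousMap.Nullhomotopic) : ψ = 1 := by
  refine ContinuousMonoidHom.ext fun x => funext fun i => ?_
  let evalᵢ : (ι → Circle) →ₜ* Circle := ⟨Pi.evalMonoidHom _ i, continuous_apply i⟩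
  exact DFunLike.congr_fun ((evalᵢ.comp ψ).eq_one_of_nullhomotopic
    (hψ.comp_right (ContinuousMap.eval i))) x

/-- A continuous automorphism `φ` of the `n`-torus such that `t ↦ t⁻¹ * φ t` is
null-homotopic is the identity. (This is the key step showing that a homotopy abelian
compact Lie group acts trivially on its maximal torus.) -/
theorem torus_automorphism_eq_id_of_nullhomotopic (n : ℕ)
    (φ : (Fin n → Circle) ≃* (Fin n → Circle)) (hφ : Continuous φ)
    (h : ContinuousMap.Nullhomotopic
      (⟨fun t : Fin n → Circle => t⁻¹ * φ t, continuous_inv.mul hφ⟩ :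
        C(Fin n → Circle, Fin n → Circle))) :
    φ = MulEquiv.refl (Fin n → Circle) := by
  let δ : (Fin n → Circle) →ₜ* (Fin n → Circle) :=
    (ContinuousMonoidHom.id _)⁻¹ * ⟨φ.toMonoidHom, hφ⟩
  have hδ : δ = 1 := δ.eq_one_of_nullhomotopic_pi h
  ext t : 1
  have hδt : t⁻¹ * φ t = 1 := DFunLike.congr_fun hδ t
  exact (inv_mul_eq_one.mp hδt).symm
end

section
/- Let G be a group and T a subgroup of G contained in the center of G such that the quotient group G ⧸ T is finite. Then the commutator subgroup ⁅G, G⁆ (the subgroup generated by all commutators x⁻¹y⁻¹xy) is finitely generated. -/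
/-!
A commutator `⁅x, y⁆` only depends on the cosets of `x` and `y` modulo the center, so when the
center has finite index there are only finitely many commutators, and `⁅G, G⁆` is generated by
them.
-/

open Subgroup

open scoped commutatorElement

section

variable {G : Type*} [Group G]

theorem commutatorElement_mul_mul_of_mem_center (x y : G) {t s : G} (ht : t ∈ center G)
    (hs : s ∈ center G) : ⁅x * t, y * s⁆ = ⁅x, y⁆ := by
  have hty : ⁅t, y * s⁆ = 1 := Commute.commutator_eq (mem_center_iff.mp ht (y * s)).symm
  have hxs : ⁅x, s⁆ = 1 := Commute.commutator_eq (mem_center_iff.mp hs x)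
  rw [commutatorElement_mul_left_eq_conj_mul, hty, mul_one, mul_inv_cancel, one_mul,
    commutatorElement_mul_right_eq_mul_conj, hxs, mul_one, mul_inv_cancel_right]

theorem commutatorSet_subset_range_out_center :
    commutatorSet G ⊆
      Set.range fun p : (G ⧸ center G) × (G ⧸ center G) => ⁅p.1.out, p.2.out⁆ := by
  rintro _ ⟨x, y, rfl⟩
  obtain ⟨t, hxt⟩ := QuotientGroup.mk_out_eq_mul (center G) x
  obtain ⟨s, hys⟩ := QuotientGroup.mk_out_eq_mul (center G) y
  refine ⟨(x, y), ?_⟩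
  simp only [hxt, hys, commutatorElement_mul_mul_of_mem_center x y t.2 s.2]

theorem finite_commutatorSet_of_finiteIndex_center [(center G).FiniteIndex] :
    Finite (commutatorSet G) :=
  ((Set.finite_range _).subset commutatorSet_subset_range_out_center).to_subtype

end

/-- If `T` is a central subgroup of `G` with finite quotient `G ⧸ T`, then the commutator
subgroup `⁅G, G⁆` is finitely generated. -/
theorem commutator_fg_of_finite_quotient_by_central {G : Type*} [Group G] (T : Subgroup G)
    (hT : T ≤ Subgroup.center G) (hfin : Finite (G ⧸ T)) :
    (commutator G).FG := by
  have : T.FiniteIndex := finiteIndex_of_finite_quotient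
  have : (center G).FiniteIndex := finiteIndex_of_le hT
  have : Finite (commutatorSet G) := finite_commutatorSet_of_finiteIndex_center
  exact (Group.fg_iff_subgroup_fg _).mp inferInstance
end

section
/- Let G be a topological group and T a subgroup of G contained in the center of G such that T is open, T is path-connected, and the quotient group G ⧸ T is finite and commutative. Then the commutator map c : G × G → G, c(x,y) = x⁻¹y⁻¹xy, is null-homotopic as a continuous map, i.e. G is homotopy abelian. -/
/-!
The commutator map takes values in `T` because `G ⧸ T` is commutative, and it is locally
constant because it is unchanged when its arguments are moved inside their cosets of the open
central subgroup `T`. A locally constant map whose values are all joined by paths to one point is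
homotopic to the constant map at that point: follow the chosen paths, which are continuous in the
time variable and locally independent of the space variable.
-/

open unitInterval

/-- The commutator map `c : G × G → G`, `c(x, y) = x⁻¹y⁻¹xy`, as a continuous map. -/
def commutatorMap (G : Type*) [Group G] [TopologicalSpace G] [IsTopologicalGroup G] :
    C(G × G, G) :=
  ⟨fun p => p.1⁻¹ * p.2⁻¹ * p.1 * p.2, by continuity⟩

section Algebra

variable {G : Type*} [Group G]

theorem inv_mul_inv_mul_mul_mem_of_quotient_comm (N : Subgroup G) [N.Normal]
    (hcomm : ∀ a b : G ⧸ N, a * b = b * a) (x y : G) : x⁻¹ * y⁻¹ * x * y ∈ N := by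
  rw [← QuotientGroup.eq_one_iff]
  simp only [QuotientGroup.mk_mul, QuotientGroup.mk_inv, mul_assoc, hcomm (x : G ⧸ N) (y : G ⧸ N)]
  group

theorem inv_mul_mul_eq_of_mem_center {z : G} (hz : z ∈ Subgroup.center G) (g : G) :
    z⁻¹ * g * z = g := by
  rw [mul_assoc, Subgroup.mem_center_iff.mp hz g, inv_mul_cancel_left]

theorem mul_inv_mul_inv_mul_mul_of_mem_center {t s : G} (ht : t ∈ Subgroup.center G)
    (hs : s ∈ Subgroup.center G) (x y : G) :
    (x * t)⁻¹ * (y * s)⁻¹ * (x * t) * (y * s) = x⁻¹ * y⁻¹ * x * y :=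
  calc (x * t)⁻¹ * (y * s)⁻¹ * (x * t) * (y * s)
      = t⁻¹ * (x⁻¹ * (s⁻¹ * (y⁻¹ * x * (t * y)) * s)) := by group
    _ = t⁻¹ * (x⁻¹ * y⁻¹ * x * y) * t := by
      rw [inv_mul_mul_eq_of_mem_center hs, ← Subgroup.mem_center_iff.mp ht y]; group
    _ = x⁻¹ * y⁻¹ * x * y := inv_mul_mul_eq_of_mem_center ht _

end Algebra

section Topology

variable {X : Type*} [TopologicalSpace X]

theorem IsLocallyConstant.continuous_uncurry_comp {Y Z W : Type*} [TopologicalSpace Z]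
    [TopologicalSpace W] {f : X → Y} (hf : IsLocallyConstant f) {g : Y → Z → W}
    (hg : ∀ y, Continuous (g y)) :
    Continuous fun p : Z × X => g (f p.2) p.1 := by
  refine continuous_iff_continuousAt.mpr fun p => ?_
  have hlocal : (fun q : Z × X => g (f q.2) q.1) =ᶠ[nhds p] fun q => g (f p.2) q.1 :=
    (continuous_snd.continuousAt.eventually (hf.eventually_eq p.2)).mono
      fun q hq => congrArg (g · q.1) hq
  exact ((hg (f p.2)).comp continuous_fst).continuousAt.congr hlocal.symm

theorem IsLocallyConstant.homotopic_const {Y : Type*} [TopologicalSpace Y] {f : C(X, Y)}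
    (hf : IsLocallyConstant f) {y : Y} (hy : ∀ x, Joined y (f x)) :
    (ContinuousMap.const X y).Homotopic f := by
  classical
  -- The path is chosen as a function of the value `f x`, so it is locally constant in `x`.
  let path : Y → I → Y := fun z => if h : Joined y z then h.somePath else fun _ => y
  have hpath : ∀ x, path (f x) = (hy x).somePath := fun x => dif_pos (hy x)
  have hpath_cont : ∀ z, Continuous (path z) := fun z => by
    by_cases h : Joined y z
    · simpa only [path, dif_pos h] using h.somePath.continuous
    · simpa only [path, dif_neg h] using continuous_const
  exact ⟨{ toFun := fun p => path (f p.2) p.1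
           continuous_toFun := hf.continuous_uncurry_comp hpath_cont
           map_zero_left := fun x => by simp [hpath]
           map_one_left := fun x => by simp [hpath] }⟩

end Topology

section TopologicalGroup

variable {G : Type*} [Group G] [TopologicalSpace G] [IsTopologicalGroup G]

theorem commutatorMap_apply (p : G × G) : commutatorMap G p = p.1⁻¹ * p.2⁻¹ * p.1 * p.2 := rfl

theorem isLocallyConstant_commutatorMap {T : Subgroup G} (hT : T ≤ Subgroup.center G)
    (hopen : IsOpen (T : Set G)) : IsLocallyConstant (commutatorMap G) := by
  refine (IsLocallyConstant.iff_exists_open _).mpr fun p => ?_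
  refine ⟨{q | p.1⁻¹ * q.1 ∈ T ∧ p.2⁻¹ * q.2 ∈ T},
    (hopen.preimage (continuous_const.mul continuous_fst)).inter
      (hopen.preimage (continuous_const.mul continuous_snd)),
    by simp, fun q ⟨hq₁, hq₂⟩ => ?_⟩
  simpa only [commutatorMap_apply, mul_inv_cancel_left] using
    mul_inv_mul_inv_mul_mul_of_mem_center (hT hq₁) (hT hq₂) p.1 p.2

end TopologicalGroup

theorem nullhomotopic_commutatorMap_of_central_open_pathConnected_general {G : Type*} [Group G]
    [TopologicalSpace G] [IsTopologicalGroup G] (T : Subgroup G) [T.Normal]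
    (hT : T ≤ Subgroup.center G) (hopen : IsOpen (T : Set G))
    (hpath : IsPathConnected (T : Set G))
    (hcomm : ∀ a b : G ⧸ T, a * b = b * a) :
    (commutatorMap G).Nullhomotopic := by
  have hjoined : ∀ p, Joined 1 (commutatorMap G p) := fun p =>
    (hpath.joinedIn 1 T.one_mem _
      (inv_mul_inv_mul_mul_mem_of_quotient_comm T hcomm p.1 p.2)).joined
  exact ⟨1, ((isLocallyConstant_commutatorMap hT hopen).homotopic_const hjoined).symm⟩

/-- If a topological group `G` has an open, path-connected central subgroup `T` such that
the quotient `G ⧸ T` is finite and commutative, then `G` is homotopy abelian, i.e. its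
commutator map is null-homotopic. -/
theorem nullhomotopic_commutatorMap_of_central_open_pathConnected {G : Type*} [Group G]
    [TopologicalSpace G] [IsTopologicalGroup G] (T : Subgroup G) [T.Normal]
    (hT : T ≤ Subgroup.center G) (hopen : IsOpen (T : Set G))
    (hpath : IsPathConnected (T : Set G)) (hfin : Finite (G ⧸ T))
    (hcomm : ∀ a b : G ⧸ T, a * b = b * a) :
    (commutatorMap G).Nullhomotopic :=
  nullhomotopic_commutatorMap_of_central_open_pathConnected_general T hT hopen hpath hcomm
end

section
/- Let G be a topological group whose identity component G₀ (the connected component of the identity) is isomorphic as a topological group to a torus (Fin n → Circle) for some natural number n. If the commutator map c : G × G → G, c(x,y) = x⁻¹y⁻¹xy, is null-homotopic, then G₀ is contained in the center of G. -/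
theorem IsCoveringMap.exists_lift_of_nullhomotopic {E X A : Type*} [TopologicalSpace E]
    [TopologicalSpace X] [TopologicalSpace A] {p : E → X} (cov : IsCoveringMap p)
    (hp : Function.Surjective p) {f : C(A, X)} (hf : f.Nullhomotopic) :
    ∃ F : C(A, E), p ∘ F = f := by
  obtain ⟨x, ⟨H⟩⟩ := hf
  obtain ⟨e, rfl⟩ := hp x
  let L := cov.liftHomotopy H.symm.toContinuousMap (.const A e) (fun a => by simp)
  refine ⟨⟨fun a => L (1, a), by fun_prop⟩, funext fun a => ?_⟩
  simpa using congrFun (cov.liftHomotopy_lifts H.symm.toContinuousMap _ _) (1, a)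

open unitInterval in
theorem ContinuousMap.Nullhomotopic.codRestrict {X Y : Type*} [TopologicalSpace X]
    [TopologicalSpace Y] [Nonempty X] {f : C(X, Y)} (hf : f.Nullhomotopic) {s : Set Y}
    (hs : ∀ y ∈ s, connectedComponent y ⊆ s) (hfs : ∀ x, f x ∈ s) :
    (⟨fun x => ⟨f x, hfs x⟩, f.continuous.subtype_mk _⟩ : C(X, s)).Nullhomotopic := by
  obtain ⟨y, ⟨H⟩⟩ := hf
  -- each track `t ↦ H (t, x)` is connected and starts at `f x ∈ s`
  have hH : ∀ p : I × X, H p ∈ s := fun ⟨t, x⟩ =>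
    hs _ (hfs x) <| (isPreconnected_range (f := fun t => H (t, x)) (by fun_prop)
      ).subset_connectedComponent ⟨0, by simp⟩ ⟨t, rfl⟩
  have hy : y ∈ s := by simpa using hH (1, Classical.arbitrary X)
  exact ⟨⟨y, hy⟩, ⟨{
    toFun := fun p => ⟨H p, hH p⟩
    continuous_toFun := H.continuous.subtype_mk _
    map_zero_left := fun x => Subtype.ext (H.apply_zero x)
    map_one_left := fun x => Subtype.ext (H.apply_one x) }⟩⟩

theorem eq_zero_of_map_mul_eq_add {M : Type*} [Monoid M] [TopologicalSpace M] [CompactSpace M]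
    {f : M → ℝ} (hf : Continuous f) (hmul : ∀ x y, f (x * y) = f x + f y) (x : M) :
    f x = 0 := by
  have hone : f 1 = 0 := by simpa using hmul 1 1
  have hpow (n : ℕ) : f (x ^ n) = n * f x := by
    induction n with
    | zero => simp [hone]
    | succ n ih => rw [pow_succ, hmul, ih]; push_cast; ring
  obtain ⟨C, hC⟩ := (isCompact_range hf.abs).bddAbove
  by_contra hx
  have hpos : 0 < |f x| := abs_pos.mpr hx
  obtain ⟨n, hn⟩ := exists_nat_gt (C / |f x|)
  have hbound : |f (x ^ n)| ≤ C := hC ⟨x ^ n, rfl⟩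
  rw [hpow, abs_mul, Nat.abs_cast, ← le_div_iff₀ hpos] at hbound
  linarith

theorem ContinuousMonoidHom.eq_one_of_nullhomotopic_circle {K : Type*} [Monoid K]
    [TopologicalSpace K] [ContinuousMul K] [CompactSpace K] [PreconnectedSpace K]
    (φ : K →ₜ* Circle) (hφ : φ.toContinuousMap.Nullhomotopic) : φ = 1 := by
  obtain ⟨F, hF⟩ := Circle.isCoveringMap_exp.exists_lift_of_nullhomotopic Circle.exp_surjective hφ
  have hFφ (x : K) : Circle.exp (F x) = φ x := congrFun hF x
  -- `(x, y) ↦ F (x * y) + F 1` and `(x, y) ↦ F x + F y` lift the same map and agree at `(1, 1)`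
  have hadd : (fun p : K × K => F (p.1 * p.2) + F 1) = fun p => F p.1 + F p.2 :=
    Circle.isCoveringMap_exp.eq_of_comp_eq (by fun_prop) (by fun_prop)
      (funext fun p => by simp [Circle.exp_add, hFφ]) (1, 1) (by simp)
  have hconst (x : K) : F x - F 1 = 0 :=
    eq_zero_of_map_mul_eq_add (f := fun x => F x - F 1) (by fun_prop)
      (fun x y => by linarith [congrFun hadd (x, y)]) x
  ext x
  rw [← hFφ, sub_eq_zero.mp (hconst x), hFφ, map_one]
  rfl

theorem ContinuousMonoidHom.eq_one_of_nullhomotopic_pi_circle {K ι : Type*} [Monoid K]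
    [TopologicalSpace K] [ContinuousMul K] [CompactSpace K] [PreconnectedSpace K]
    (φ : K →ₜ* (ι → Circle)) (hφ : φ.toContinuousMap.Nullhomotopic) : φ = 1 := by
  refine ContinuousMonoidHom.ext fun x => funext fun i => ?_
  let evalᵢ : (ι → Circle) →ₜ* Circle := ⟨Pi.evalMonoidHom _ i, continuous_apply i⟩
  exact DFunLike.congr_fun ((evalᵢ.comp φ).eq_one_of_nullhomotopic_circle
    (hφ.comp_right evalᵢ.toContinuousMap)) x

section

variable {G : Type*} [Group G] [TopologicalSpace G] [IsTopologicalGroup G]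

instance Subgroup.normal_connectedComponentOfOne : (connectedComponentOfOne G).Normal where
  conj_mem x hx g := by
    have hconj : Continuous fun y : G => g * y * g⁻¹ := by fun_prop
    exact (by simpa using hconj.image_connectedComponent_subset 1 ⟨x, hx, rfl⟩ :
      g * x * g⁻¹ ∈ connectedComponent 1)

def commutatorMapLeft (g : G) :
    C(Subgroup.connectedComponentOfOne G, Subgroup.connectedComponentOfOne G) where
  toFun x := ⟨g⁻¹ * x⁻¹ * g * x, by
    simpa using mul_mem (Subgroup.Normal.conj_mem inferInstance _ (inv_mem x.2) g⁻¹) x.2⟩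
  continuous_toFun := by fun_prop

theorem nullhomotopic_commutatorMapLeft (hnull : (commutatorMap G).Nullhomotopic) (g : G) :
    (commutatorMapLeft g).Nullhomotopic :=
  (hnull.comp_left ⟨fun x : Subgroup.connectedComponentOfOne G => (g, (x : G)),
    by fun_prop⟩).codRestrict (s := connectedComponent (1 : G))
    (fun _ hy => (connectedComponent_eq hy).symm.subset) (fun x => (commutatorMapLeft g x).2)

theorem commutatorMapLeft_apply (g : G) (x : Subgroup.connectedComponentOfOne G) :
    commutatorMapLeft g x = (MulAut.conjNormal g⁻¹ x)⁻¹ * x :=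
  Subtype.ext <| show g⁻¹ * x⁻¹ * g * x = _ by simp [mul_assoc]

theorem connectedComponentOfOne_le_center_of_injective
    [CompactSpace (Subgroup.connectedComponentOfOne G)] {ι : Type*}
    (j : Subgroup.connectedComponentOfOne G →* (ι → Circle)) (hj : Continuous j)
    (hj_inj : Function.Injective j) (hnull : (commutatorMap G).Nullhomotopic) :
    Subgroup.connectedComponentOfOne G ≤ Subgroup.center G := by
  have : PreconnectedSpace (Subgroup.connectedComponentOfOne G) :=
    Subtype.preconnectedSpace isPreconnected_connectedComponent
  intro x hx
  refine Subgroup.mem_center_iff.mpr fun g => ?_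
  -- `j ∘ c(g, ·)` is a homomorphism since `c(g, y) = (g⁻¹ y g)⁻¹ y` and `ι → Circle` is commutative
  let ψ : Subgroup.connectedComponentOfOne G →ₜ* (ι → Circle) :=
    { toFun := j ∘ commutatorMapLeft g
      map_one' := by simp [commutatorMapLeft_apply]
      map_mul' y z := by
        simp only [Function.comp_apply, commutatorMapLeft_apply, map_mul, map_inv, mul_inv]
        exact mul_mul_mul_comm _ _ _ _
      continuous_toFun := hj.comp (commutatorMapLeft g).continuous }
  have hψ : ψ = 1 := ψ.eq_one_of_nullhomotopic_pi_circle
    ((nullhomotopic_commutatorMapLeft hnull g).comp_right ⟨j, hj⟩)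
  have hc : commutatorMapLeft g ⟨x, hx⟩ = 1 :=
    hj_inj ((DFunLike.congr_fun hψ ⟨x, hx⟩).trans (map_one j).symm)
  replace hc : g⁻¹ * x⁻¹ * g * x = 1 := congrArg Subtype.val hc
  calc g * x = x * g * (g⁻¹ * x⁻¹ * g * x) := by group
    _ = x * g := by rw [hc, mul_one]

end

/-- If the identity component of a topological group `G` is a torus (as a topological
group) and the commutator map of `G` is null-homotopic, then the identity component is
central in `G`. -/
theorem connectedComponentOfOne_le_center_of_nullhomotopic {G : Type*} [Group G]
    [TopologicalSpace G] [IsTopologicalGroup G] (n : ℕ)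
    (e : (Subgroup.connectedComponentOfOne G) ≃* (Fin n → Circle))
    (he : Continuous e) (he' : Continuous e.symm)
    (hnull : (commutatorMap G).Nullhomotopic) :
    Subgroup.connectedComponentOfOne G ≤ Subgroup.center G :=
  have : CompactSpace (Subgroup.connectedComponentOfOne G) := e.symm.surjective.compactSpace he'
  connectedComponentOfOne_le_center_of_injective e.toMonoidHom he e.injective hnull
end

section
/- Let Q₈ denote the quaternion group of order eight and let G = (Circle × Q₈) ⧸ N, where N is the central subgroup of order two of Circle × Q₈ generated by the element (−1, −1) (in the presentation QuaternionGroup 2, the element −1 of Q₈ is a², the unique central element of order 2). Then the commutator subgroup ⁅G, G⁆ of G has exactly two elements, namely the images of (1, 1) and (−1, 1). -/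
/-- The element `-1` of the circle group. -/
noncomputable def Circle.negOne : Circle :=
  ⟨-1, by
    show (-1 : ℂ) ∈ Metric.sphere (0 : ℂ) 1
    simp⟩

/-- The central subgroup of order two of `Circle × Q₈` generated by `(-1, -1)`, where
`-1 = a²` in `Q₈ = QuaternionGroup 2`. -/
noncomputable def centralTwo : Subgroup (Circle × QuaternionGroup 2) :=
  Subgroup.zpowers (Circle.negOne, QuaternionGroup.a 2)

instance : centralTwo.Normal := by
  constructor
  intro x hx g
  obtain ⟨k, rfl⟩ := Subgroup.mem_zpowers_iff.mp hx
  have ha : ∀ q : QuaternionGroup 2, q * QuaternionGroup.a 2 = QuaternionGroup.a 2 * q := by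
    decide
  have hz : Commute g (Circle.negOne, QuaternionGroup.a 2) :=
    Prod.ext (mul_comm _ _) (ha g.2)
  have h : Commute g ((Circle.negOne, QuaternionGroup.a 2) ^ k) := hz.zpow_right k
  rw [h.eq, mul_assoc, mul_inv_cancel, mul_one]
  exact Subgroup.mem_zpowers_iff.mpr ⟨k, rfl⟩

/-- The quotient group `G = (Circle × Q₈) ⧸ ⟨(-1, -1)⟩`. -/
noncomputable abbrev QG : Type :=
  (Circle × QuaternionGroup 2) ⧸ centralTwo

/-!
The circle is abelian, so the commutator subgroup of `Circle × Q₈` is `1 × ⁅Q₈, Q₈⁆ = 1 × {±1}`,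
and commutator subgroups are carried onto commutator subgroups by surjections. Hence `⁅G, G⁆` is
generated by the image of `(1, -1)`, which modulo `N` is the image of `(-1, 1)`: an involution
that is nontrivial in `G` because `(-1, 1) ∉ N = {1, (-1, -1)}`.
-/

open Subgroup
open scoped commutatorElement

theorem commutator_prod_eq_map_inr (A B : Type*) [CommGroup A] [Group B] :
    commutator (A × B) = (commutator B).map (MonoidHom.inr A B) := by
  rw [commutator_def, ← top_prod_top, commutator_prod_prod, ← commutator_def, commutator_eq_bot,
    ← commutator_def]
  ext ⟨a, b⟩
  simp [mem_prod, and_comm, eq_comm]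

theorem Subgroup.map_commutator_of_surjective {G G' : Type*} [Group G] [Group G'] {f : G →* G'}
    (hf : Function.Surjective f) : (_root_.commutator G).map f = _root_.commutator G' := by
  rw [_root_.commutator_def, map_commutator, map_top_of_surjective f hf, _root_.commutator_def]

theorem Subgroup.coe_zpowers_of_mul_self_eq_one {G : Type*} [Group G] {g : G} (hg : g * g = 1) :
    (zpowers g : Set G) = {1, g} := by
  have hsq : g ^ 2 = 1 := by rw [sq, hg]
  ext x
  simp only [SetLike.mem_coe, mem_zpowers_iff, Set.mem_insert_iff, Set.mem_singleton_iff]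
  constructor
  · rintro ⟨k, rfl⟩
    rw [zpow_eq_zpow_emod' k hsq]
    rcases Int.emod_two_eq_zero_or_one k with h | h <;> simp [h]
  · rintro (rfl | rfl)
    exacts [⟨0, zpow_zero _⟩, ⟨1, zpow_one _⟩]

theorem QuaternionGroup.commutator_two :
    commutator (QuaternionGroup 2) = zpowers (QuaternionGroup.a 2) := by
  apply le_antisymm
  · rw [commutator_def, commutator_le]
    have key : ∀ p q : QuaternionGroup 2, ⁅p, q⁆ = 1 ∨ ⁅p, q⁆ = a 2 := by decide
    intro p _ q _
    rcases key p q with h | h <;> rw [h]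
    exacts [one_mem _, mem_zpowers _]
  · have : (a 2 : QuaternionGroup 2) = ⁅(a 1 : QuaternionGroup 2), xa 0⁆ := by decide
    rw [zpowers_le, this]
    exact commutator_mem_commutator (mem_top _) (mem_top _)

theorem Circle.negOne_mul_self : Circle.negOne * Circle.negOne = 1 := by
  ext
  rw [Circle.coe_mul]
  simp [Circle.negOne]

theorem Circle.negOne_ne_one : Circle.negOne ≠ 1 := by
  intro h
  have := congrArg ((↑) : Circle → ℂ) h
  norm_num [Circle.negOne] at this

theorem coe_centralTwo :
    (centralTwo : Set (Circle × QuaternionGroup 2)) = {1, (Circle.negOne, QuaternionGroup.a 2)} :=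
  coe_zpowers_of_mul_self_eq_one (Prod.ext Circle.negOne_mul_self (by decide))

theorem mk_negOne_one_eq_mk_one_a_two :
    (QuotientGroup.mk (Circle.negOne, 1) : QG) = QuotientGroup.mk (1, QuaternionGroup.a 2) := by
  rw [QuotientGroup.eq, ← SetLike.mem_coe, coe_centralTwo]
  right
  ext <;> simp [inv_eq_of_mul_eq_one_right Circle.negOne_mul_self]

theorem mk_negOne_one_mul_self :
    (QuotientGroup.mk (Circle.negOne, 1) * QuotientGroup.mk (Circle.negOne, 1) : QG) = 1 := by
  rw [← QuotientGroup.mk_mul, Prod.mk_mul_mk, Circle.negOne_mul_self, mul_one]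
  rfl

theorem mk_negOne_one_ne_one : (QuotientGroup.mk (Circle.negOne, 1) : QG) ≠ 1 := by
  rw [Ne, QuotientGroup.eq_one_iff, ← SetLike.mem_coe, coe_centralTwo]
  rintro (h | h)
  · exact Circle.negOne_ne_one (congrArg Prod.fst h)
  · exact absurd (congrArg Prod.snd h) (by decide)

theorem commutator_QG_eq_zpowers :
    commutator QG = zpowers (QuotientGroup.mk (Circle.negOne, 1)) := by
  rw [← map_commutator_of_surjective (QuotientGroup.mk'_surjective centralTwo),
    commutator_prod_eq_map_inr, QuaternionGroup.commutator_two, map_map, MonoidHom.map_zpowers,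
    mk_negOne_one_eq_mk_one_a_two]
  rfl

/-- The commutator subgroup of `G = (Circle × Q₈) ⧸ ⟨(-1, -1)⟩` consists of exactly two
elements: the images of `(1, 1)` and `(-1, 1)`. -/
theorem commutator_quotient_circle_quaternion :
    (commutator QG : Set QG) =
      {QuotientGroup.mk ((1 : Circle), (1 : QuaternionGroup 2)),
        QuotientGroup.mk (Circle.negOne, (1 : QuaternionGroup 2))} ∧
    (QuotientGroup.mk (Circle.negOne, (1 : QuaternionGroup 2)) : QG) ≠
      QuotientGroup.mk ((1 : Circle), (1 : QuaternionGroup 2)) :=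
  ⟨by rw [commutator_QG_eq_zpowers, coe_zpowers_of_mul_self_eq_one mk_negOne_one_mul_self]; rfl,
    mk_negOne_one_ne_one⟩
end

section
/- The special linear group SL(2, ℝ), with its topology as a subspace of the 2×2 real matrices, is homotopy abelian but not commutative: its commutator map c : SL(2,ℝ) × SL(2,ℝ) → SL(2,ℝ), c(x,y) = x⁻¹y⁻¹xy, is null-homotopic, yet there exist x, y ∈ SL(2,ℝ) with x * y ≠ y * x. -/
/-- `SL(2, ℝ)` carries the subspace topology from the `2 × 2` real matrices. -/
noncomputable instance : TopologicalSpace (Matrix.SpecialLinearGroup (Fin 2) ℝ) :=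
  show TopologicalSpace {A : Matrix (Fin 2) (Fin 2) ℝ // A.det = 1} from inferInstance

instance : ContinuousMul (Matrix.SpecialLinearGroup (Fin 2) ℝ) := by
  constructor
  apply continuous_induced_rng.2
  show Continuous fun p :
      Matrix.SpecialLinearGroup (Fin 2) ℝ × Matrix.SpecialLinearGroup (Fin 2) ℝ =>
    ((p.1 : Matrix (Fin 2) (Fin 2) ℝ) * (p.2 : Matrix (Fin 2) (Fin 2) ℝ))
  exact (continuous_subtype_val.comp continuous_fst).matrix_mul
    (continuous_subtype_val.comp continuous_snd)

instance : ContinuousInv (Matrix.SpecialLinearGroup (Fin 2) ℝ) := by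
  constructor
  apply continuous_induced_rng.2
  show Continuous fun a : Matrix.SpecialLinearGroup (Fin 2) ℝ =>
    Matrix.adjugate (a : Matrix (Fin 2) (Fin 2) ℝ)
  exact continuous_subtype_val.matrix_adjugate

instance : IsTopologicalGroup (Matrix.SpecialLinearGroup (Fin 2) ℝ) := {}

open scoped MatrixGroups
open ContinuousMap Real

theorem commutatorMap_nullhomotopic_of_homotopic_id {G : Type*} [Group G] [TopologicalSpace G]
    [IsTopologicalGroup G] {r : C(G, G)} (hr : (ContinuousMap.id G).Homotopic r)
    (hcomm : ∀ x y, Commute (r x) (r y)) : (commutatorMap G).Nullhomotopic := by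
  have hconst : (commutatorMap G).comp (r.prodMap r) = const _ 1 := by
    ext p
    simp [commutatorMap, mul_assoc, (hcomm p.1 p.2).eq]
  refine ⟨1, ?_⟩
  rw [← hconst]
  exact (Homotopic.refl (commutatorMap G)).comp (hr.prodMap hr)

namespace SL2R

lemma sq_add_sq_col_pos (A : SL(2, ℝ)) : 0 < A 0 0 ^ 2 + A 1 0 ^ 2 := by
  have hdet := A.det_coe
  rw [Matrix.det_fin_two] at hdet
  by_contra! h
  have h0 : A 0 0 = 0 := by nlinarith
  have h1 : A 1 0 = 0 := by nlinarith
  simp [h0, h1] at hdet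

noncomputable def colNorm (A : SL(2, ℝ)) : ℝ := √(A 0 0 ^ 2 + A 1 0 ^ 2)

def colInner (A : SL(2, ℝ)) : ℝ := A 0 0 * A 0 1 + A 1 0 * A 1 1

lemma colNorm_pos (A : SL(2, ℝ)) : 0 < colNorm A := sqrt_pos.2 (sq_add_sq_col_pos A)

lemma colNorm_sq (A : SL(2, ℝ)) : colNorm A ^ 2 = A 0 0 ^ 2 + A 1 0 ^ 2 :=
  sq_sqrt (sq_add_sq_col_pos A).le

noncomputable def rotPart (A : SL(2, ℝ)) : SL(2, ℝ) :=
  ⟨!![A 0 0 / colNorm A, -(A 1 0 / colNorm A); A 1 0 / colNorm A, A 0 0 / colNorm A], by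
    have := colNorm_pos A
    rw [Matrix.det_fin_two_of]
    field_simp
    rw [colNorm_sq]
    ring⟩

/-- The diagonal is parametrised by `exp` so that the straight-line contraction of `(s, v)`
to `(0, 0)` stays in `SL(2, ℝ)`. -/
noncomputable def upperTriangular (s v : ℝ) : SL(2, ℝ) :=
  ⟨!![exp s, v; 0, exp (-s)], by simp [Matrix.det_fin_two_of, ← exp_add]⟩

@[simp]
lemma coe_rotPart (A : SL(2, ℝ)) : (rotPart A : Matrix (Fin 2) (Fin 2) ℝ) =
    !![A 0 0 / colNorm A, -(A 1 0 / colNorm A); A 1 0 / colNorm A, A 0 0 / colNorm A] :=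
  rfl

@[simp]
lemma coe_upperTriangular (s v : ℝ) :
    (upperTriangular s v : Matrix (Fin 2) (Fin 2) ℝ) = !![exp s, v; 0, exp (-s)] :=
  rfl

lemma rotPart_mul_upperTriangular (A : SL(2, ℝ)) :
    rotPart A * upperTriangular (log (colNorm A)) (colInner A / colNorm A) = A := by
  have hn := colNorm_pos A
  have hdet := A.det_coe
  rw [Matrix.det_fin_two] at hdet
  ext i j
  fin_cases i <;> fin_cases j <;>
    simp [colInner, Matrix.mul_apply, Fin.sum_univ_two, exp_neg, exp_log hn] <;>
    field_simp
  · linear_combination A 1 0 * hdet - A 0 1 * colNorm_sq A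
  · linear_combination -A 0 0 * hdet - A 1 1 * colNorm_sq A

lemma upperTriangular_zero_zero : upperTriangular 0 0 = 1 := by
  ext i j
  fin_cases i <;> fin_cases j <;> simp

lemma commute_rotPart (A B : SL(2, ℝ)) : Commute (rotPart A) (rotPart B) := by
  ext i j
  fin_cases i <;> fin_cases j <;> simp [Matrix.mul_apply, Fin.sum_univ_two] <;> ring

lemma not_commute_upperTriangular : ¬Commute (upperTriangular 1 0) (upperTriangular 0 1) := by
  intro h
  have h01 := congrArg (fun A : SL(2, ℝ) => A 0 1) h.eq
  norm_num [Matrix.mul_apply, Fin.sum_univ_two] at h01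

@[fun_prop]
lemma continuous_entry (i j : Fin 2) : Continuous fun A : SL(2, ℝ) => A i j :=
  continuous_subtype_val.matrix_elem i j

@[fun_prop]
lemma continuous_colNorm : Continuous colNorm := by
  unfold colNorm
  fun_prop

@[fun_prop]
lemma continuous_colInner : Continuous colInner := by
  unfold colInner
  fun_prop

@[fun_prop]
lemma continuous_rotPart : Continuous rotPart := by
  refine Continuous.subtype_mk (continuous_matrix fun i j => ?_) _
  fin_cases i <;> fin_cases j <;> simp <;> fun_prop (disch := exact fun _ => (colNorm_pos _).ne')

@[fun_prop]
lemma Continuous.upperTriangular {X : Type*} [TopologicalSpace X] {s v : X → ℝ}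
    (hs : Continuous s) (hv : Continuous v) : Continuous fun x => upperTriangular (s x) (v x) := by
  refine Continuous.subtype_mk (continuous_matrix fun i j => ?_) _
  fin_cases i <;> fin_cases j <;> simp <;> fun_prop

theorem homotopic_id_rotPart :
    (ContinuousMap.id SL(2, ℝ)).Homotopic ⟨rotPart, continuous_rotPart⟩ :=
  ⟨{ toFun p := rotPart p.2 * upperTriangular ((1 - p.1) * log (colNorm p.2))
        ((1 - p.1) * (colInner p.2 / colNorm p.2))
     continuous_toFun := by fun_prop (disch := exact fun _ => (colNorm_pos _).ne')
     map_zero_left A := by simpa using rotPart_mul_upperTriangular A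
     map_one_left A := by simp [upperTriangular_zero_zero] }⟩

end SL2R

/-- Remark 4.9: `SL(2, ℝ)` is homotopy abelian (its commutator map is null-homotopic)
but not commutative. -/
theorem sl2R_homotopy_abelian_not_commutative :
    (commutatorMap (Matrix.SpecialLinearGroup (Fin 2) ℝ)).Nullhomotopic ∧
    ∃ x y : Matrix.SpecialLinearGroup (Fin 2) ℝ, x * y ≠ y * x :=
  ⟨commutatorMap_nullhomotopic_of_homotopic_id SL2R.homotopic_id_rotPart SL2R.commute_rotPart,
    SL2R.upperTriangular 1 0, SL2R.upperTriangular 0 1, SL2R.not_commute_upperTriangular⟩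
end
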